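/- In a delegation game with effortless voting (e_i = 0 for all agents) and independent probabilistic types, a pure strategy Nash equilibrium always exists; moreover, best response dynamics starting from the all-direct-voting profile converges to one. -/

import Mathlib

/-!
Write `y_i = 2 x_i - 1` and `s_g = (2 q_g - 1) y_g`. Following a guru `g` gives agent `i` the
accuracy `(1 + s_g y_i) / 2`, so `i` prefers `g` to voting itself iff `s_g y_i > 2 q_i - 1`, and
once it prefers `g` it also prefers `g` to every guru `v` with `|s_v| ≤ |s_g|`.

Gurus are chosen greedily: at each stage the unsettled agent of largest `|s|` becomes a guru and
settles every unsettled agent that prefers it and reaches it through a network path of such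
agents; these delegate along shortest paths. No agent gains by deviating: a neighbour settled in an
earlier stage leads to a guru the agent does not prefer (otherwise the agent would have been
settled at that stage), and any other neighbour leads to a guru of smaller `|s|`. Letting the
delegating agents switch one at a time, by stage and then by distance to their guru, every switch
is a strictly improving best response.
-/

open Classical

/-- Proximity of two agents with independent Bernoulli type parameters `a` and `b`. -/
def prox (a b : ℝ) : ℝ := a * b + (1 - a) * (1 - b)

/-- Inherited accuracy of agent `i` under delegation profile `d` with independent
probabilistic types `x` and accuracies `q`, in the effortless setting:
`q_g * p_{i,g} + (1-q_g) * (1-p_{i,g})` if `i`'s guru is `g`, and `1/2` in a cycle. -/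
noncomputable def probAcc {n : ℕ} (x q : Fin n → ℝ) (d : Fin n → Fin n) (i : Fin n) : ℝ :=
  if h : ∃ k, d (d^[k] i) = d^[k] i then
    q (d^[Nat.find h] i) * prox (x i) (x (d^[Nat.find h] i)) +
      (1 - q (d^[Nat.find h] i)) * (1 - prox (x i) (x (d^[Nat.find h] i)))
  else 1/2

/-- Utility in the effortless delegation game. -/
noncomputable def probUtil {n : ℕ} (x q : Fin n → ℝ) (d : Fin n → Fin n) (i : Fin n) : ℝ :=
  if d i = i then q i else probAcc x q d i

theorem Relation.ReflTransGen.exists_seq {α : Type*} {r : α → α → Prop} {a b : α}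
    (h : Relation.ReflTransGen r a b) :
    ∃ (T : ℕ) (f : ℕ → α), f 0 = a ∧ (∀ t < T, r (f t) (f (t + 1))) ∧ f T = b := by
  induction h with
  | refl => exact ⟨0, fun _ => a, rfl, by simp, rfl⟩
  | @tail _ c _ hbc ih =>
    obtain ⟨T, f, hf0, hf, hfT⟩ := ih
    refine ⟨T + 1, fun t => if t ≤ T then f t else c, by simpa using hf0, fun t ht => ?_,
      by simp⟩
    rcases Nat.lt_succ_iff_lt_or_eq.mp ht with ht | rfl
    · simpa [ht.le, Nat.succ_le_of_lt ht] using hf t ht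
    · simpa [hfT] using hbc

namespace Function

variable {β : Type*} {f : β → β} {a : β}

theorem iterate_eq_of_isFixedPt {k l : ℕ} (hk : IsFixedPt f (f^[k] a))
    (hl : IsFixedPt f (f^[l] a)) : f^[k] a = f^[l] a := by
  wlog hkl : k ≤ l generalizing k l
  · exact (this hl hk (le_of_not_ge hkl)).symm
  rw [← Nat.sub_add_cancel hkl, iterate_add_apply, hk.iterate]

theorem not_isFixedPt_iterate_of_isPeriodicPt {P : ℕ} (hP : IsPeriodicPt f P a) (hP0 : 0 < P)
    (ha : ¬ IsFixedPt f a) (k : ℕ) : ¬ IsFixedPt f (f^[k] a) := by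
  intro hk
  obtain ⟨c, hc⟩ : ∃ c, P * (k + 1) = c + k :=
    ⟨P * (k + 1) - k, (Nat.sub_add_cancel (by nlinarith)).symm⟩
  have hback : f^[c + k] a = a := hc ▸ (hP.mul_const (k + 1)).eq
  rw [iterate_add_apply, hk.iterate] at hback
  exact ha (hback ▸ hk)

theorem iterate_update_eq [DecidableEq β] {i j : β} {m : ℕ} (h : ∀ k < m, f^[k] a ≠ i) :
    (update f i j)^[m] a = f^[m] a := by
  induction m with
  | zero => rfl
  | succ m ih =>
    rw [iterate_succ_apply', iterate_succ_apply', ih fun k hk => h k (by omega),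
      update_of_ne (h m (by omega))]

end Function

namespace GreedyGurus

open Finset

noncomputable section

variable {α : Type*}

section Layers

-- `B i g`: agent `i` would rather delegate to the guru `g` than vote itself.
variable (B R : α → α → Prop)

def layer (g : α) (U : Finset α) : ℕ → Finset α
  | 0 => {g}
  | m + 1 => U.filter fun i => B i g ∧ ∃ j ∈ layer g U m, R i j

def basin [Fintype α] (g : α) (U : Finset α) : Finset α :=
  univ.filter fun i => ∃ m, i ∈ layer B R g U m

variable {B R} {g i : α} {U : Finset α}

theorem mem_layer_zero : i ∈ layer B R g U 0 ↔ i = g := mem_singleton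

theorem mem_layer_succ {m : ℕ} :
    i ∈ layer B R g U (m + 1) ↔ i ∈ U ∧ B i g ∧ ∃ j ∈ layer B R g U m, R i j :=
  mem_filter

theorem layer_subset (hg : g ∈ U) : ∀ m, layer B R g U m ⊆ U
  | 0 => singleton_subset_iff.mpr hg
  | _ + 1 => filter_subset _ _

theorem mem_basin [Fintype α] : i ∈ basin B R g U ↔ ∃ m, i ∈ layer B R g U m := by
  simp [basin]

end Layers

def leader [Nonempty α] (w : α → ℝ) (V : Finset α) : α :=
  Classical.epsilon fun g => g ∈ V ∧ ∀ v ∈ V, w v ≤ w g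

theorem leader_spec [Nonempty α] {w : α → ℝ} {V : Finset α} (hV : V.Nonempty) :
    leader w V ∈ V ∧ ∀ v ∈ V, w v ≤ w (leader w V) :=
  Classical.epsilon_spec (V.exists_max_image w hV)

variable [Fintype α] [DecidableEq α] [Nonempty α] (w : α → ℝ) (B R : α → α → Prop)

def settled : ℕ → Finset α
  | 0 => ∅
  | t + 1 => settled t ∪ basin B R (leader w (settled t)ᶜ) (settled t)ᶜ

variable {w B R}

theorem settled_mono : Monotone (settled w B R) :=
  monotone_nat_of_le_succ fun _ => subset_union_left

theorem leader_mem_settled_succ (t : ℕ) :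
    leader w (settled w B R t)ᶜ ∈ settled w B R (t + 1) :=
  mem_union_right _ (mem_basin.mpr ⟨0, mem_layer_zero.mpr rfl⟩)

theorem exists_mem_settled_succ (i : α) : ∃ t, i ∈ settled w B R (t + 1) := by
  by_contra! h
  have hi : ∀ t, i ∉ settled w B R t
    | 0 => notMem_empty i
    | t + 1 => h t
  have hcard : ∀ t, t ≤ #(settled w B R t) := by
    intro t
    induction t with
    | zero => exact Nat.zero_le _
    | succ t ih =>
      have hlead :=
        (leader_spec (w := w) (V := (settled w B R t)ᶜ) ⟨i, mem_compl.mpr (hi t)⟩).1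
      have hlt : settled w B R t ⊂ settled w B R (t + 1) :=
        ssubset_iff_of_subset (settled_mono t.le_succ) |>.mpr
          ⟨_, leader_mem_settled_succ t, mem_compl.mp hlead⟩
      exact Nat.succ_le_of_lt (ih.trans_lt (card_lt_card hlt))
  exact absurd (hcard (Fintype.card α + 1)) (not_le.mpr (Nat.lt_succ_of_le (card_le_univ _)))

variable (w B R)

def stage (i : α) : ℕ := Nat.find (exists_mem_settled_succ (w := w) (B := B) (R := R) i)

def guru (i : α) : α := leader w (settled w B R (stage w B R i))ᶜ

variable {w B R}

theorem mem_settled_iff {i : α} {t : ℕ} : i ∈ settled w B R t ↔ stage w B R i < t := by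
  constructor
  · intro h
    cases t with
    | zero => exact absurd h (notMem_empty i)
    | succ t => exact Nat.lt_succ_of_le (Nat.find_min' _ h)
  · intro h
    exact settled_mono (Nat.succ_le_of_lt h) (Nat.find_spec (exists_mem_settled_succ i))

theorem guru_notMem_settled (i : α) : guru w B R i ∉ settled w B R (stage w B R i) :=
  mem_compl.mp (leader_spec ⟨i, mem_compl.mpr (mem_settled_iff.not.mpr (lt_irrefl _))⟩).1

theorem le_weight_guru {i v : α} (h : stage w B R i ≤ stage w B R v) :
    w v ≤ w (guru w B R i) := by
  have hv : v ∈ (settled w B R (stage w B R i))ᶜ :=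
    mem_compl.mpr (mem_settled_iff.not.mpr h.not_gt)
  exact (leader_spec ⟨v, hv⟩).2 v hv

theorem mem_basin_guru (i : α) :
    i ∈ basin B R (guru w B R i) (settled w B R (stage w B R i))ᶜ := by
  have hi : i ∈ settled w B R (stage w B R i + 1) := mem_settled_iff.mpr (Nat.lt_succ_self _)
  rw [settled, mem_union, mem_settled_iff] at hi
  exact hi.resolve_left (lt_irrefl _)

theorem stage_eq_of_mem_basin {i v : α}
    (hv : v ∈ basin B R (guru w B R i) (settled w B R (stage w B R i))ᶜ) :
    stage w B R v = stage w B R i := by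
  obtain ⟨m, hm⟩ := mem_basin.mp hv
  have hle := mem_settled_iff.not.mp
    (mem_compl.mp (layer_subset (mem_compl.mpr (guru_notMem_settled i)) m hm))
  have hlt : stage w B R v < stage w B R i + 1 := mem_settled_iff.mp (mem_union_right _ hv)
  omega

theorem guru_eq_of_stage_eq {i v : α} (h : stage w B R v = stage w B R i) :
    guru w B R v = guru w B R i := by
  simp only [guru, h]

theorem stage_guru (i : α) : stage w B R (guru w B R i) = stage w B R i :=
  stage_eq_of_mem_basin (mem_basin.mpr ⟨0, mem_layer_zero.mpr rfl⟩)

theorem guru_guru (i : α) : guru w B R (guru w B R i) = guru w B R i :=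
  guru_eq_of_stage_eq (stage_guru i)

theorem not_benefit_guru_of_stage_lt {i j : α} (hR : R i j) (h : stage w B R j < stage w B R i) :
    ¬ B i (guru w B R j) := by
  intro hB
  obtain ⟨m, hm⟩ := mem_basin.mp (mem_basin_guru (w := w) (B := B) (R := R) j)
  have hi : i ∈ (settled w B R (stage w B R j))ᶜ :=
    mem_compl.mpr (mem_settled_iff.not.mpr h.le.not_gt)
  have := stage_eq_of_mem_basin
    (mem_basin.mpr ⟨m + 1, mem_layer_succ.mpr ⟨hi, hB, j, hm, hR⟩⟩)
  omega

theorem exists_mem_layer_guru (i : α) :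
    ∃ m, i ∈ layer B R (guru w B R i) (settled w B R (stage w B R i))ᶜ m :=
  mem_basin.mp (mem_basin_guru i)

variable (w B R)

def depth (i : α) : ℕ := Nat.find (exists_mem_layer_guru (w := w) (B := B) (R := R) i)

variable {w B R}

theorem depth_eq_zero {i : α} : depth w B R i = 0 ↔ guru w B R i = i := by
  rw [depth, Nat.find_eq_zero, mem_layer_zero, eq_comm]

theorem benefit_and_exists_adj_of_guru_ne {i : α} (h : guru w B R i ≠ i) :
    B i (guru w B R i) ∧
      ∃ j ∈ layer B R (guru w B R i) (settled w B R (stage w B R i))ᶜ (depth w B R i - 1),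
        R i j := by
  have hi := Nat.find_spec (exists_mem_layer_guru (w := w) (B := B) (R := R) i)
  rw [← depth, ← Nat.sub_add_cancel (Nat.pos_of_ne_zero (depth_eq_zero.not.mpr h)),
    mem_layer_succ] at hi
  exact hi.2

variable (w B R)

def next (i : α) : α :=
  if h : guru w B R i = i then i else (benefit_and_exists_adj_of_guru_ne h).2.choose

def rank (i : α) : ℕ ×ₗ ℕ := toLex (stage w B R i, depth w B R i)

variable {w B R} {i : α}

theorem benefit_guru (h : guru w B R i ≠ i) : B i (guru w B R i) :=
  (benefit_and_exists_adj_of_guru_ne h).1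

theorem next_of_guru_eq (h : guru w B R i = i) : next w B R i = i := dif_pos h

theorem next_mem_layer_and_adj (h : guru w B R i ≠ i) :
    next w B R i ∈
        layer B R (guru w B R i) (settled w B R (stage w B R i))ᶜ (depth w B R i - 1) ∧
      R i (next w B R i) := by
  rw [next, dif_neg h]
  exact (benefit_and_exists_adj_of_guru_ne h).2.choose_spec

theorem stage_next (h : guru w B R i ≠ i) : stage w B R (next w B R i) = stage w B R i :=
  stage_eq_of_mem_basin (mem_basin.mpr ⟨_, (next_mem_layer_and_adj h).1⟩)

theorem guru_next (h : guru w B R i ≠ i) : guru w B R (next w B R i) = guru w B R i :=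
  guru_eq_of_stage_eq (stage_next h)

theorem depth_next_lt (h : guru w B R i ≠ i) : depth w B R (next w B R i) < depth w B R i := by
  have hle : depth w B R (next w B R i) ≤ depth w B R i - 1 := by
    apply Nat.find_min'
    rw [guru_next h, stage_next h]
    exact (next_mem_layer_and_adj h).1
  have hpos := Nat.pos_of_ne_zero (depth_eq_zero.not.mpr h)
  omega

theorem rank_next_lt (h : guru w B R i ≠ i) : rank w B R (next w B R i) < rank w B R i :=
  Prod.Lex.toLex_lt_toLex.mpr (Or.inr ⟨stage_next h, depth_next_lt h⟩)

theorem rank_lt_of_stage_lt {j : α} (h : stage w B R i < stage w B R j) :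
    rank w B R i < rank w B R j :=
  Prod.Lex.toLex_lt_toLex.mpr (Or.inl h)

variable (w B R)

def nextOn (S : Finset α) (a : α) : α := if a ∈ S then next w B R a else a

def IsRankLower (S : Finset α) : Prop :=
  ∀ a ∈ S, ∀ b, rank w B R b < rank w B R a → b ∈ S

variable {w B R} {S : Finset α}

theorem nextOn_empty : nextOn w B R ∅ = id :=
  funext fun a => if_neg (notMem_empty a)

theorem nextOn_univ : nextOn w B R univ = next w B R := by
  funext a
  simp [nextOn]

theorem nextOn_insert (a : α) :
    nextOn w B R (insert a S) = Function.update (nextOn w B R S) a (next w B R a) := by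
  funext b
  by_cases hb : b = a
  · subst hb
    simp [nextOn]
  · simp [nextOn, hb]

theorem nextOn_guru (i : α) : nextOn w B R S (guru w B R i) = guru w B R i := by
  unfold nextOn
  split_ifs
  · exact next_of_guru_eq (guru_guru i)
  · rfl

theorem exists_iterate_nextOn_eq_guru (hS : IsRankLower w B R S)
    (hi : i ∈ S ∨ guru w B R i = i) :
    ∃ m, (nextOn w B R S)^[m] i = guru w B R i := by
  induction hd : depth w B R i using Nat.strong_induction_on generalizing i with
  | _ d ih =>
  by_cases hg : guru w B R i = i
  · exact ⟨0, hg.symm⟩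
  have hiS : i ∈ S := hi.resolve_right hg
  obtain ⟨m, hm⟩ := ih _ (hd ▸ depth_next_lt hg) (Or.inl (hS i hiS _ (rank_next_lt hg))) rfl
  refine ⟨m + 1, ?_⟩
  rw [Function.iterate_succ_apply, nextOn, if_pos hiS, hm, guru_next hg]

theorem IsRankLower.of_insert {a : α} (h : IsRankLower w B R (insert a S)) (ha : a ∉ S)
    (hmax : ∀ x ∈ S, rank w B R x ≤ rank w B R a) : IsRankLower w B R S := by
  intro a' ha' b hb
  refine (mem_insert.mp (h a' (mem_insert_of_mem ha') b hb)).resolve_left ?_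
  rintro rfl
  exact (hb.trans_le (hmax a' ha')).false

theorem IsRankLower.mem_of_rank_lt {a b : α} (h : IsRankLower w B R (insert a S)) (ha : a ∉ S)
    (hb : rank w B R b < rank w B R a) : b ∈ S := by
  refine (mem_insert.mp (h a (mem_insert_self a S) b hb)).resolve_left ?_
  rintro rfl
  exact hb.false

end

end GreedyGurus

namespace DelegationGame

open Finset Function GreedyGurus

noncomputable section

variable {n : ℕ} (x q : Fin n → ℝ)

def tilt (i : Fin n) : ℝ := 2 * x i - 1

def signal (g : Fin n) : ℝ := (2 * q g - 1) * tilt x g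

/-- Since `prox (x i) (x g) = (1 + tilt x i * tilt x g) / 2`, following a guru `g` gives `i` the
accuracy `(1 + (2 q_g - 1)(2 p_{i,g} - 1)) / 2 = (1 + signal g * tilt i) / 2`. -/
def inheritedAcc (i g : Fin n) : ℝ := (1 + signal x q g * tilt x i) / 2

def Prefers (i g : Fin n) : Prop := q i < inheritedAcc x q i g

def weight (g : Fin n) : ℝ := |signal x q g|

theorem inheritedAcc_eq (i g : Fin n) :
    q g * prox (x i) (x g) + (1 - q g) * (1 - prox (x i) (x g)) = inheritedAcc x q i g := by
  unfold inheritedAcc signal tilt prox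
  ring

variable {x q} {d : Fin n → Fin n} {i j v : Fin n} {m : ℕ}

theorem probAcc_eq_inheritedAcc (hm : d^[m] i = v) (hv : d v = v) :
    probAcc x q d i = inheritedAcc x q i v := by
  have h : ∃ k, d (d^[k] i) = d^[k] i := ⟨m, hm ▸ hv⟩
  have hfind : d^[Nat.find h] i = v :=
    hm ▸ iterate_eq_of_isFixedPt (Nat.find_spec h) (show IsFixedPt d (d^[m] i) from hm ▸ hv)
  rw [probAcc, dif_pos h, hfind, inheritedAcc_eq]

theorem probUtil_eq_inheritedAcc (hi : d i ≠ i) (hm : d^[m] i = v) (hv : d v = v) :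
    probUtil x q d i = inheritedAcc x q i v := by
  rw [probUtil, if_neg hi, probAcc_eq_inheritedAcc hm hv]

theorem probUtil_update_self : probUtil x q (update d i i) i = q i := by
  simp [probUtil]

theorem probUtil_update_of_iterate_eq (hji : j ≠ i) (hm : d^[m] j = i) :
    probUtil x q (update d i j) i = 1 / 2 := by
  have h : ∃ k, d^[k] j = i := ⟨m, hm⟩
  have hne : update d i j i ≠ i := by simpa using hji
  have hper : IsPeriodicPt (update d i j) (Nat.find h + 1) i := by
    rw [IsPeriodicPt, IsFixedPt, iterate_succ_apply, update_self,
      iterate_update_eq fun k hk => Nat.find_min h hk, Nat.find_spec h]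
  rw [probUtil, if_neg hne, probAcc, dif_neg]
  exact fun ⟨k, hk⟩ => not_isFixedPt_iterate_of_isPeriodicPt hper (Nat.succ_pos _) hne k hk

theorem probUtil_update_of_forall_iterate_ne (hji : j ≠ i) (hm : d^[m] j = v) (hv : d v = v)
    (hj : ∀ k, d^[k] j ≠ i) : probUtil x q (update d i j) i = inheritedAcc x q i v := by
  have hvi : v ≠ i := hm ▸ hj m
  refine probUtil_eq_inheritedAcc (m := m + 1) (by simpa using hji) ?_ ?_
  · rw [iterate_succ_apply, update_self, iterate_update_eq fun k _ => hj k, hm]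
  · rw [update_of_ne hvi, hv]

theorem probUtil_update_le {c : ℝ} (hji : j ≠ i) (hm : d^[m] j = v) (hv : d v = v)
    (hc : 1 / 2 ≤ c) (hvc : inheritedAcc x q i v ≤ c) :
    probUtil x q (update d i j) i ≤ c := by
  by_cases h : ∃ k, d^[k] j = i
  · obtain ⟨k, hk⟩ := h
    rwa [probUtil_update_of_iterate_eq hji hk]
  · rwa [probUtil_update_of_forall_iterate_ne hji hm hv (not_exists.mp h)]

theorem abs_tilt_le_one (hxi : x i ∈ Set.Icc (0 : ℝ) 1) : |tilt x i| ≤ 1 := by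
  rw [tilt, abs_le]
  constructor <;> linarith [hxi.1, hxi.2]

theorem abs_signal_le (hxi : x i ∈ Set.Icc (0 : ℝ) 1) (hqi : 1 / 2 ≤ q i) :
    |signal x q i| ≤ 2 * q i - 1 := by
  rw [signal, abs_mul, abs_of_nonneg (by linarith)]
  exact mul_le_of_le_one_right (by linarith) (abs_tilt_le_one hxi)

theorem inheritedAcc_le_of_abs_signal_le (hxi : x i ∈ Set.Icc (0 : ℝ) 1)
    (h : |signal x q v| ≤ 2 * q i - 1) : inheritedAcc x q i v ≤ q i := by
  have : signal x q v * tilt x i ≤ |signal x q v| :=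
    (le_abs_self _).trans (by
      rw [abs_mul]; exact mul_le_of_le_one_right (abs_nonneg _) (abs_tilt_le_one hxi))
  rw [inheritedAcc]
  linarith

theorem inheritedAcc_le_of_prefers (hqi : 1 / 2 ≤ q i) (hg : Prefers x q i j)
    (h : |signal x q v| ≤ |signal x q j|) : inheritedAcc x q i v ≤ inheritedAcc x q i j := by
  rw [Prefers, inheritedAcc] at hg
  have hpos : 0 ≤ signal x q j * tilt x i := by linarith
  have : signal x q v * tilt x i ≤ signal x q j * tilt x i :=
    calc signal x q v * tilt x i ≤ |signal x q v| * |tilt x i| :=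
          (le_abs_self _).trans (abs_mul _ _).le
      _ ≤ |signal x q j| * |tilt x i| := mul_le_mul_of_nonneg_right h (abs_nonneg _)
      _ = signal x q j * tilt x i := by rw [← abs_mul, abs_of_nonneg hpos]
  rw [inheritedAcc, inheritedAcc]
  linarith

variable (x q) (R : Fin n → Fin n → Prop)

def IsBestResponseStep (d d' : Fin n → Fin n) : Prop :=
  ∃ i j, (j = i ∨ R i j) ∧ d' = update d i j ∧ probUtil x q d i < probUtil x q d' i ∧
    ∀ j', (j' = i ∨ R i j') → probUtil x q (update d i j') i ≤ probUtil x q d' i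

def IsNashEquilibrium (d : Fin n → Fin n) : Prop :=
  (∀ i, d i = i ∨ R i (d i)) ∧
    ∀ i j, (j = i ∨ R i j) → probUtil x q (update d i j) i ≤ probUtil x q d i

variable [Nonempty (Fin n)]

local notation "γ" => guru (weight x q) (Prefers x q) R
local notation "ρ" => stage (weight x q) (Prefers x q) R
local notation "ν" => next (weight x q) (Prefers x q) R
local notation "ν[" S "]" => nextOn (weight x q) (Prefers x q) R S
local notation "κ" => rank (weight x q) (Prefers x q) R

def payoff (i : Fin n) : ℝ := max (q i) (inheritedAcc x q i (γ i))

variable {x q R}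

theorem q_le_payoff (i : Fin n) : q i ≤ payoff x q R i := le_max_left _ _

variable (hx : ∀ i, x i ∈ Set.Icc (0 : ℝ) 1) (hq : ∀ i, 1 / 2 ≤ q i)
include hx hq

theorem inheritedAcc_le_payoff (h : ρ i ≤ ρ v) : inheritedAcc x q i v ≤ payoff x q R i := by
  have hw : |signal x q v| ≤ |signal x q (γ i)| := le_weight_guru h
  by_cases hp : Prefers x q i (γ i)
  · exact (inheritedAcc_le_of_prefers (hq i) hp hw).trans (le_max_right _ _)
  · have hg : γ i = i := not_not.mp (mt benefit_guru hp)
    rw [hg] at hw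
    exact (inheritedAcc_le_of_abs_signal_le (hx i) (hw.trans (abs_signal_le (hx i) (hq i)))).trans
      (q_le_payoff i)

theorem inheritedAcc_guru_le_payoff (hR : R i j) :
    inheritedAcc x q i (γ j) ≤ payoff x q R i := by
  rcases lt_or_ge (ρ j) (ρ i) with h | h
  · have hnp : ¬ Prefers x q i (γ j) := not_benefit_guru_of_stage_lt hR h
    exact (not_lt.mp hnp).trans (q_le_payoff i)
  · exact inheritedAcc_le_payoff hx hq (h.trans_eq (stage_guru j).symm)

variable {S : Finset (Fin n)}

theorem probUtil_nextOn (hS : IsRankLower (weight x q) (Prefers x q) R S)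
    (hi : i ∈ S ∨ γ i = i) :
    probUtil x q ν[S] i = payoff x q R i := by
  by_cases hg : γ i = i
  · have hfix : ν[S] i = i := hg ▸ nextOn_guru i
    rw [probUtil, if_pos hfix, payoff, hg, max_eq_left
      (inheritedAcc_le_of_abs_signal_le (hx i) (abs_signal_le (hx i) (hq i)))]
  · have hiS := hi.resolve_right hg
    obtain ⟨m, hm⟩ := exists_iterate_nextOn_eq_guru hS hi
    have hne : ν[S] i ≠ i := by
      rw [nextOn, if_pos hiS]
      exact fun h => (rank_next_lt hg).ne (congrArg _ h)
    rw [probUtil_eq_inheritedAcc hne hm (nextOn_guru i), payoff, max_eq_right (benefit_guru hg).le]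

theorem probUtil_update_nextOn_le_payoff (hS : IsRankLower (weight x q) (Prefers x q) R S)
    (hout : ∀ j ∉ S, ρ i ≤ ρ j) (hj : j = i ∨ R i j) :
    probUtil x q (update ν[S] i j) i ≤ payoff x q R i := by
  rcases eq_or_ne j i with rfl | hji
  · rw [probUtil_update_self]
    exact q_le_payoff j
  have hR := hj.resolve_left hji
  have hc : 1 / 2 ≤ payoff x q R i := (hq i).trans (q_le_payoff i)
  by_cases hjS : j ∈ S
  · obtain ⟨m, hm⟩ := exists_iterate_nextOn_eq_guru hS (Or.inl hjS)
    exact probUtil_update_le hji hm (nextOn_guru j) hc (inheritedAcc_guru_le_payoff hx hq hR)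
  · exact probUtil_update_le (m := 0) hji rfl (if_neg hjS) hc
      (inheritedAcc_le_payoff hx hq (hout j hjS))

theorem isBestResponseStep_nextOn_insert {a : Fin n}
    (hS : IsRankLower (weight x q) (Prefers x q) R (insert a S)) (ha : a ∉ S)
    (hmax : ∀ b ∈ S, κ b ≤ κ a) (hga : γ a ≠ a) :
    IsBestResponseStep x q R ν[S] ν[insert a S] := by
  have hnew : probUtil x q ν[insert a S] a = payoff x q R a :=
    probUtil_nextOn hx hq hS (Or.inl (mem_insert_self a S))
  have hout : ∀ j ∉ S, ρ a ≤ ρ j := fun j hj =>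
    not_lt.mp fun h => hj (hS.mem_of_rank_lt ha (rank_lt_of_stage_lt h))
  refine ⟨a, ν a, Or.inr (next_mem_layer_and_adj hga).2, nextOn_insert a, ?_, fun j hj => ?_⟩
  · have hfix : ν[S] a = a := if_neg ha
    rw [hnew, probUtil, if_pos hfix]
    exact lt_max_of_lt_right (benefit_guru hga)
  · rw [hnew]
    exact probUtil_update_nextOn_le_payoff hx hq (hS.of_insert ha hmax) hout hj

theorem reflTransGen_nextOn (hS : IsRankLower (weight x q) (Prefers x q) R S) :
    Relation.ReflTransGen (IsBestResponseStep x q R) id ν[S] := by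
  induction S using Finset.induction_on_max_value κ with
  | empty => rw [nextOn_empty]
  | insert a S ha hmax ih =>
    have ih := ih (hS.of_insert ha hmax)
    by_cases hga : γ a = a
    · rwa [nextOn_insert, next_of_guru_eq hga, update_eq_self_iff.mpr (if_neg ha).symm]
    · exact ih.tail (isBestResponseStep_nextOn_insert hx hq hS ha hmax hga)

theorem isNashEquilibrium_next :
    IsNashEquilibrium x q R ν := by
  have hlow : IsRankLower (weight x q) (Prefers x q) R univ :=
    fun _ _ b _ => mem_univ b
  refine ⟨fun i => ?_, fun i j hj => ?_⟩
  · by_cases hg : γ i = i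
    · exact Or.inl (next_of_guru_eq hg)
    · exact Or.inr (next_mem_layer_and_adj hg).2
  · rw [← nextOn_univ, probUtil_nextOn hx hq hlow (Or.inl (mem_univ i))]
    exact probUtil_update_nextOn_le_payoff hx hq hlow (fun j hj => absurd (mem_univ j) hj) hj

end

end DelegationGame

/-- Delegation games with effortless voting always have a pure strategy Nash equilibrium;
moreover, best response dynamics starting from the all-direct-voting profile converges to
one: there is a finite sequence of profiles, starting from the identity, each obtained from
the previous one by a strictly improving best response of a single agent, ending in a Nash
equilibrium. -/
theorem effortless_delegation_game_NE_exists (n : ℕ) (R : Fin n → Fin n → Prop)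
    (x q : Fin n → ℝ)
    (hx : ∀ i, x i ∈ Set.Icc (0:ℝ) 1) (hq : ∀ i, q i ∈ Set.Icc (1/2 : ℝ) 1) :
    ∃ (T : ℕ) (seq : ℕ → Fin n → Fin n),
      seq 0 = id ∧
      (∀ t < T, ∃ i j, (j = i ∨ R i j) ∧
        seq (t + 1) = Function.update (seq t) i j ∧
        probUtil x q (seq t) i < probUtil x q (seq (t + 1)) i ∧
        (∀ j', (j' = i ∨ R i j') →
          probUtil x q (Function.update (seq t) i j') i ≤ probUtil x q (seq (t + 1)) i)) ∧
      (∀ i, seq T i = i ∨ R i (seq T i)) ∧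
      (∀ i j, (j = i ∨ R i j) →
        probUtil x q (Function.update (seq T) i j) i ≤ probUtil x q (seq T) i) := by
  cases n with
  | zero =>
    exact ⟨0, fun _ => id, rfl, fun t ht => absurd ht t.not_lt_zero, finZeroElim, finZeroElim⟩
  | succ n =>
    have hq' : ∀ i, 1 / 2 ≤ q i := fun i => (hq i).1
    obtain ⟨T, seq, h0, hstep, hT⟩ :=
      (DelegationGame.reflTransGen_nextOn hx hq' (R := R) (S := Finset.univ)
        fun _ _ b _ => Finset.mem_univ b).exists_seq
    rw [GreedyGurus.nextOn_univ] at hT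
    exact ⟨T, seq, h0, hstep, hT ▸ DelegationGame.isNashEquilibrium_next hx hq'⟩
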